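/- Let U ⊆ ℝ² be open, ω : U → ℝ smooth, and α₂, α₃ : U → Im ℍ smooth with ⟨α₂,α₂⟩ = ⟨α₃,α₃⟩ = 2e^ω, ⟨α₂,α₃⟩ = 0, satisfying ∂_u α₂ = ½ω_u α₂ − ½ω_v α₃ − e^{−ω} α₂×α₃, ∂_v α₂ = ½ω_v α₂ + ½ω_u α₃ + α₂×α₃, and ∂_u α₃ = ½ω_v α₂ + ½ω_u α₃ − α₂×α₃, ∂_v α₃ = −∂_u α₂. Then ∂_u(α₂×α₃) = 2α₂ + 2e^ω α₃ + ω_u (α₂×α₃) and ∂_v(α₂×α₃) = −2e^ω α₂ − 2α₃ + ω_v (α₂×α₃). -/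

import Mathlib

noncomputable section

open Quaternion

/-- Euclidean inner product on the quaternions: `⟨x,y⟩ = Re (x * star y)`. -/
def ipQ (x y : ℍ[ℝ]) : ℝ := (x * star y).re

/-- Cross product of (imaginary) quaternions: `α × β = ½(αβ − βα)`. -/
def crossQ (a b : ℍ[ℝ]) : ℍ[ℝ] := (1 / 2 : ℝ) • (a * b - b * a)

/-- Partial derivative in the first coordinate direction of `ℝ²`. -/
def pdu {E : Type*} [NormedAddCommGroup E] [NormedSpace ℝ E]
    (f : ℝ × ℝ → E) (x : ℝ × ℝ) : E := fderiv ℝ f x (1, 0)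

/-- Partial derivative in the second coordinate direction of `ℝ²`. -/
def pdv {E : Type*} [NormedAddCommGroup E] [NormedSpace ℝ E]
    (f : ℝ × ℝ → E) (x : ℝ × ℝ) : E := fderiv ℝ f x (0, 1)

lemma ipQ_symm (x y : ℍ[ℝ]) : ipQ x y = ipQ y x := by
  simp [ipQ, Quaternion.re_mul, Quaternion.re_star, Quaternion.imI_star,
    Quaternion.imJ_star, Quaternion.imK_star]; ring

lemma tripleQ (a b c : ℍ[ℝ]) (ha : a.re = 0) (hb : b.re = 0) (hc : c.re = 0) :
    crossQ a (crossQ b c) = ipQ a c • b - ipQ a b • c := by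
  ext <;>
  simp [crossQ, ipQ, Quaternion.re_mul, Quaternion.imI_mul, Quaternion.imJ_mul,
    Quaternion.imK_mul, Quaternion.re_star, Quaternion.imI_star, Quaternion.imJ_star,
    Quaternion.imK_star, ha, hb, hc] <;> ring

lemma crossQ_anticomm (a b : ℍ[ℝ]) : crossQ a b = -crossQ b a := by
  simp [crossQ]; module

lemma crossQ_re (a b : ℍ[ℝ]) : (crossQ a b).re = 0 := by
  simp [crossQ, Quaternion.re_mul]; ring

lemma crossQ_add_left (a b c : ℍ[ℝ]) : crossQ (a + b) c = crossQ a c + crossQ b c := by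
  simp [crossQ, add_mul, mul_add]; module
lemma crossQ_add_right (a b c : ℍ[ℝ]) : crossQ a (b + c) = crossQ a b + crossQ a c := by
  simp [crossQ, add_mul, mul_add]; module
lemma crossQ_sub_left (a b c : ℍ[ℝ]) : crossQ (a - b) c = crossQ a c - crossQ b c := by
  simp [crossQ, sub_mul, mul_sub]; module
lemma crossQ_sub_right (a b c : ℍ[ℝ]) : crossQ a (b - c) = crossQ a b - crossQ a c := by
  simp [crossQ, sub_mul, mul_sub]; module
lemma crossQ_smul_left (r : ℝ) (a b : ℍ[ℝ]) : crossQ (r • a) b = r • crossQ a b := by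
  simp [crossQ, smul_mul_assoc, mul_smul_comm]; module
lemma crossQ_smul_right (r : ℝ) (a b : ℍ[ℝ]) : crossQ a (r • b) = r • crossQ a b := by
  simp [crossQ, smul_mul_assoc, mul_smul_comm]; module
lemma crossQ_neg_left (a b : ℍ[ℝ]) : crossQ (-a) b = -crossQ a b := by
  simp [crossQ]; module
lemma crossQ_neg_right (a b : ℍ[ℝ]) : crossQ a (-b) = -crossQ a b := by
  simp [crossQ]; module
lemma crossQ_self (a : ℍ[ℝ]) : crossQ a a = 0 := by simp [crossQ]

lemma fderiv_crossQ (α₂ α₃ : ℝ × ℝ → ℍ[ℝ]) (x : ℝ × ℝ) (v : ℝ × ℝ)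
    (h2 : DifferentiableAt ℝ α₂ x) (h3 : DifferentiableAt ℝ α₃ x) :
    fderiv ℝ (fun y => crossQ (α₂ y) (α₃ y)) x v
      = crossQ (fderiv ℝ α₂ x v) (α₃ x) + crossQ (α₂ x) (fderiv ℝ α₃ x v) := by
  have hA := h2.hasFDerivAt
  have hB := h3.hasFDerivAt
  have H := ((hA.mul' hB).sub (hB.mul' hA)).const_smul (1/2 : ℝ)
  rw [show (fun y => crossQ (α₂ y) (α₃ y))
      = (1/2 : ℝ) • (α₂ * α₃ - α₃ * α₂) from rfl, H.fderiv]
  simp only [ContinuousLinearMap.coe_smul', Pi.smul_apply, ContinuousLinearMap.sub_apply,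
    ContinuousLinearMap.add_apply, ContinuousLinearMap.smul_apply,
    ContinuousLinearMap.smulRight_apply, crossQ, smul_eq_mul]
  simp only [smul_sub, smul_add, op_smul_eq_mul]
  module

/-- derivatives of the cross product `α₂×α₃` of a minimal surface frame:
`∂_u(α₂×α₃) = 2α₂ + 2e^ω α₃ + ω_u(α₂×α₃)` and
`∂_v(α₂×α₃) = −2e^ω α₂ − 2α₃ + ω_v(α₂×α₃)`. -/
theorem stmt18 (U : Set (ℝ × ℝ)) (hU : IsOpen U)
    (ω : ℝ × ℝ → ℝ) (hω : ContDiffOn ℝ (⊤ : ℕ∞) ω U)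
    (α₂ α₃ : ℝ × ℝ → ℍ[ℝ])
    (hα₂s : ContDiffOn ℝ (⊤ : ℕ∞) α₂ U) (hα₃s : ContDiffOn ℝ (⊤ : ℕ∞) α₃ U)
    (him₂ : ∀ x ∈ U, (α₂ x).re = 0) (him₃ : ∀ x ∈ U, (α₃ x).re = 0)
    (hn₂ : ∀ x ∈ U, ipQ (α₂ x) (α₂ x) = 2 * Real.exp (ω x))
    (hn₃ : ∀ x ∈ U, ipQ (α₃ x) (α₃ x) = 2 * Real.exp (ω x))
    (horth : ∀ x ∈ U, ipQ (α₂ x) (α₃ x) = 0)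
    (hf₁ : ∀ x ∈ U, pdu α₂ x = (pdu ω x / 2) • α₂ x - (pdv ω x / 2) • α₃ x
      - Real.exp (-ω x) • crossQ (α₂ x) (α₃ x))
    (hf₂ : ∀ x ∈ U, pdv α₂ x = (pdv ω x / 2) • α₂ x + (pdu ω x / 2) • α₃ x
      + crossQ (α₂ x) (α₃ x))
    (hf₃ : ∀ x ∈ U, pdu α₃ x = (pdv ω x / 2) • α₂ x + (pdu ω x / 2) • α₃ x
      - crossQ (α₂ x) (α₃ x))
    (hf₄ : ∀ x ∈ U, pdv α₃ x = -pdu α₂ x) :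
    ∀ x ∈ U,
      pdu (fun y => crossQ (α₂ y) (α₃ y)) x
        = (2 : ℝ) • α₂ x + (2 * Real.exp (ω x)) • α₃ x
          + pdu ω x • crossQ (α₂ x) (α₃ x) ∧
      pdv (fun y => crossQ (α₂ y) (α₃ y)) x
        = -((2 * Real.exp (ω x)) • α₂ x) - (2 : ℝ) • α₃ x
          + pdv ω x • crossQ (α₂ x) (α₃ x) := by
  intro x hx
  have hx' : U ∈ nhds x := hU.mem_nhds hx
  have h2 : DifferentiableAt ℝ α₂ x := (hα₂s.contDiffAt hx').differentiableAt (by simp)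
  have h3 : DifferentiableAt ℝ α₃ x := (hα₃s.contDiffAt hx').differentiableAt (by simp)
  have Lu : pdu (fun y => crossQ (α₂ y) (α₃ y)) x
      = crossQ (pdu α₂ x) (α₃ x) + crossQ (α₂ x) (pdu α₃ x) :=
    fderiv_crossQ α₂ α₃ x (1, 0) h2 h3
  have Lv : pdv (fun y => crossQ (α₂ y) (α₃ y)) x
      = crossQ (pdv α₂ x) (α₃ x) + crossQ (α₂ x) (pdv α₃ x) :=
    fderiv_crossQ α₂ α₃ x (0, 1) h2 h3
  have t2 : crossQ (α₂ x) (crossQ (α₂ x) (α₃ x))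
      = -((2 * Real.exp (ω x)) • α₃ x) := by
    rw [tripleQ _ _ _ (him₂ x hx) (him₂ x hx) (him₃ x hx), horth x hx, hn₂ x hx]
    simp
  have t3 : crossQ (α₃ x) (crossQ (α₂ x) (α₃ x))
      = (2 * Real.exp (ω x)) • α₂ x := by
    rw [tripleQ _ _ _ (him₃ x hx) (him₂ x hx) (him₃ x hx), hn₃ x hx,
      ipQ_symm, horth x hx]
    simp
  have t3' : crossQ (crossQ (α₂ x) (α₃ x)) (α₃ x)
      = -((2 * Real.exp (ω x)) • α₂ x) := by
    rw [crossQ_anticomm, t3]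
  have hexp : Real.exp (-ω x) * (2 * Real.exp (ω x)) = 2 := by
    rw [Real.exp_neg]
    field_simp
  constructor
  · rw [Lu, hf₁ x hx, hf₃ x hx]
    simp only [crossQ_sub_left, crossQ_sub_right, crossQ_add_left, crossQ_add_right,
      crossQ_smul_left, crossQ_smul_right, crossQ_self, t2, t3', smul_neg, smul_smul,
      hexp, smul_zero]
    module
  · rw [Lv, hf₂ x hx, hf₄ x hx, hf₁ x hx]
    simp only [crossQ_neg_right, crossQ_sub_left, crossQ_sub_right, crossQ_add_left,
      crossQ_add_right, crossQ_smul_left, crossQ_smul_right, crossQ_self, t2, t3',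
      smul_neg, smul_smul, hexp, smul_zero]
    module
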